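/- Let τ be a complex number with Im τ > 0, let q = e^{2πiτ}, let m, n be positive integers, and let y₁, y₂, …, y_n be complex numbers with y₁ + y₂ + ⋯ + y_n = 0. Then ∑_{k=0}^{mn-1} ∏_{j=1}^{n} θ₃(z + y_j + kπ/(mn) | τ) = G_{m,n}(y₁, …, y_n | τ) · θ₃(mnz | m²nτ) for every complex number z, where G_{m,n}(y₁, …, y_n | τ) = mn · ∑_{r₁,…,r_n ∈ ℤ, r₁+⋯+r_n = 0} q^{(r₁²+⋯+r_n²)/2} e^{2i(r₁y₁+⋯+r_ny_n)}. -/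

import Mathlib

/-!
Expanding every factor into its Fourier series turns the product into a sum over `r ∈ ℤⁿ`, and
the shift `z ↦ z + kπ/(mn)` multiplies the `r`-th term by `e^{2πik(r₁+⋯+rₙ)/(mn)}`. Summing over
`k` keeps, with weight `mn`, exactly the `r` with `mn ∣ r₁+⋯+rₙ`. These are the vectors
`r = ρ + m s (1,…,1)` with `s ∈ ℤ` and `ρ₁+⋯+ρₙ = 0`, and since both `ρ` and `y` sum to zero the
cross terms cancel: the `r`-th term splits as the `ρ`-th term of `G` times the `s`-th term of
`θ₃(mnz | m²nτ)`.
-/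

open scoped BigOperators

/-- The Jacobi theta function θ₃(z|τ) = ∑_{n∈ℤ} q^{n²/2} e^{2niz}, where q = e^{2πiτ}. -/
noncomputable def θ₃ (z τ : ℂ) : ℂ :=
  ∑' k : ℤ, Complex.exp (2 * Real.pi * Complex.I * τ * ((k : ℂ) ^ 2 / 2)) *
    Complex.exp (2 * (k : ℂ) * Complex.I * z)

/-- G_{m,n}(y₁,…,y_n|τ) = mn · ∑_{r₁+⋯+r_n=0} q^{(r₁²+⋯+r_n²)/2} e^{2i(r₁y₁+⋯+r_ny_n)}. -/
noncomputable def G (m n : ℕ) (y : Fin n → ℂ) (τ : ℂ) : ℂ :=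
  (m : ℂ) * (n : ℂ) * ∑' r : {r : Fin n → ℤ // ∑ j, r j = 0},
    Complex.exp (2 * Real.pi * Complex.I * τ * ((∑ j, ((r.1 j : ℂ)) ^ 2) / 2)) *
    Complex.exp (2 * Complex.I * ∑ j, (r.1 j : ℂ) * y j)

open Complex Finset
open scoped Real

section PiProd
variable {ι R : Type*} [NormedCommRing R]

theorem summable_norm_pi_prod {n : ℕ} {f : Fin n → ι → R}
    (hf : ∀ j, Summable fun k => ‖f j k‖) :
    Summable fun r : Fin n → ι => ‖∏ j, f j (r j)‖ := by
  induction n with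
  | zero => exact Summable.of_finite
  | succ n ih =>
    have h := (hf 0).mul_norm (ih fun j => hf j.succ)
    refine (Fin.consEquiv fun _ => ι).summable_iff.mp (h.congr fun p => ?_)
    simp [Fin.prod_univ_succ]

theorem tsum_pi_prod [CompleteSpace R] {n : ℕ} {f : Fin n → ι → R}
    (hf : ∀ j, Summable fun k => ‖f j k‖) :
    ∑' r : Fin n → ι, ∏ j, f j (r j) = ∏ j, ∑' k, f j k := by
  induction n with
  | zero => simp
  | succ n ih =>
    rw [Fin.prod_univ_succ, ← ih fun j => hf j.succ,
      tsum_mul_tsum_of_summable_norm (hf 0) (summable_norm_pi_prod fun j => hf j.succ),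
      ← (Fin.consEquiv fun _ => ι).tsum_eq]
    simp [Fin.prod_univ_succ]

end PiProd

theorem IsPrimitiveRoot.geom_sum_zpow_eq_ite {K : Type*} [Field K] {ζ : K} {N : ℕ}
    (hζ : IsPrimitiveRoot ζ N) (S : ℤ) :
    ∑ k ∈ range N, (ζ ^ S) ^ k = if (N : ℤ) ∣ S then (N : K) else 0 := by
  split_ifs with hS
  · simp [(hζ.zpow_eq_one_iff_dvd S).mpr hS]
  · have hξ : ζ ^ S ≠ 1 := fun h => hS ((hζ.zpow_eq_one_iff_dvd S).mp h)
    have hξN : (ζ ^ S) ^ N = 1 := by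
      rw [← zpow_natCast, ← zpow_mul, mul_comm, zpow_mul, zpow_natCast, hζ.pow_eq_one, one_zpow]
    rw [geom_sum_eq hξ, hξN, sub_self, zero_div]

theorem sum_range_exp_eq_ite {N : ℕ} (hN : N ≠ 0) (S : ℤ) :
    ∑ k ∈ range N, cexp (2 * π * I * S * k / N) = if (N : ℤ) ∣ S then (N : ℂ) else 0 := by
  rw [← (Complex.isPrimitiveRoot_exp N hN).geom_sum_zpow_eq_ite S]
  refine sum_congr rfl fun k _ => ?_
  rw [← Complex.exp_int_mul, ← Complex.exp_nat_mul]
  ring_nf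

theorem tsum_ite_dvd_sum_eq_tsum_shift {α : Type*} [AddCommMonoid α] [TopologicalSpace α]
    {m n : ℕ} (hm : m ≠ 0) (hn : n ≠ 0) (f : (Fin n → ℤ) → α) :
    ∑' r : Fin n → ℤ, (if (m * n : ℤ) ∣ ∑ j, r j then f r else 0)
      = ∑' p : ℤ × {ρ : Fin n → ℤ // ∑ j, ρ j = 0}, f (fun j => p.2.1 j + m * p.1) := by
  let g (p : ℤ × {ρ : Fin n → ℤ // ∑ j, ρ j = 0}) (j : Fin n) : ℤ := p.2.1 j + m * p.1
  have hg_sum (p) : ∑ j, g p j = m * n * p.1 := by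
    simp only [g, sum_add_distrib, p.2.2, sum_const, card_univ, Fintype.card_fin,
      Int.nsmul_eq_mul, zero_add]
    ring
  have hg : g.Injective := by
    rintro ⟨s, ρ⟩ ⟨s', ρ'⟩ h
    have hs : s = s' := by
      have := congrArg (fun r => ∑ j, r j) h
      simp only [hg_sum] at this
      exact mul_left_cancel₀ (by simp [hm, hn]) this
    subst hs
    exact Prod.ext rfl (Subtype.ext (funext fun j => by simpa [g] using congrFun h j))
  rw [← hg.tsum_eq]
  · exact tsum_congr fun p => if_pos ⟨p.1, hg_sum p⟩
  · intro r hr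
    obtain ⟨t, ht⟩ : (m * n : ℤ) ∣ ∑ j, r j := by
      by_contra h
      exact hr (if_neg h)
    refine ⟨(t, ⟨fun j => r j - m * t, ?_⟩), ?_⟩
    · simp only [sum_sub_distrib, ht, sum_const, card_univ, Fintype.card_fin, Int.nsmul_eq_mul]
      ring
    · ext j
      simp [g]

noncomputable def θ₃_term (τ w : ℂ) (k : ℤ) : ℂ :=
  cexp (π * I * τ * k ^ 2 + 2 * k * I * w)

theorem θ₃_eq_tsum_θ₃_term (z τ : ℂ) : θ₃ z τ = ∑' k, θ₃_term τ z k := by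
  refine tsum_congr fun k => ?_
  rw [θ₃_term, ← Complex.exp_add]
  ring_nf

theorem θ₃_term_eq_jacobiTheta₂_term (τ w : ℂ) (k : ℤ) :
    θ₃_term τ w k = jacobiTheta₂_term k (w / π) τ := by
  rw [θ₃_term, jacobiTheta₂_term]
  congr 1
  field_simp [Real.pi_ne_zero]
  ring

theorem summable_norm_θ₃_term {τ : ℂ} (hτ : 0 < τ.im) (w : ℂ) :
    Summable fun k => ‖θ₃_term τ w k‖ := by
  simp_rw [θ₃_term_eq_jacobiTheta₂_term]
  exact ((summable_jacobiTheta₂_term_iff _ τ).mpr hτ).norm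

theorem θ₃_term_add (τ w c : ℂ) (k : ℤ) :
    θ₃_term τ (w + c) k = θ₃_term τ w k * cexp (2 * k * I * c) := by
  rw [θ₃_term, θ₃_term, ← Complex.exp_add]
  ring_nf

theorem prod_θ₃_term_add_mul {n : ℕ} (τ z : ℂ) (m : ℕ) {y : Fin n → ℂ} (hy : ∑ j, y j = 0)
    {ρ : Fin n → ℤ} (hρ : ∑ j, ρ j = 0) (s : ℤ) :
    ∏ j, θ₃_term τ (z + y j) (ρ j + m * s)
      = (∏ j, θ₃_term τ (y j) (ρ j)) * θ₃_term ((m : ℂ) ^ 2 * n * τ) ((m : ℂ) * n * z) s := by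
  have hρ' : ∑ j, (ρ j : ℂ) = 0 := by exact_mod_cast hρ
  simp only [θ₃_term, ← Complex.exp_sum, ← Complex.exp_add]
  congr 1
  have expand (j : Fin n) : π * I * τ * ((ρ j + m * s : ℤ) : ℂ) ^ 2
      + 2 * ((ρ j + m * s : ℤ) : ℂ) * I * (z + y j)
      = (π * I * τ * (ρ j : ℂ) ^ 2 + 2 * (ρ j : ℂ) * I * y j)
        + 2 * I * (π * τ * m * s + z) * ρ j + 2 * m * s * I * y j
        + (π * I * τ * m ^ 2 * s ^ 2 + 2 * m * s * I * z) := by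
    push_cast
    ring
  simp only [expand, sum_add_distrib, ← mul_sum, sum_const, card_univ, Fintype.card_fin,
    nsmul_eq_mul, hρ', hy]
  ring

theorem prod_θ₃_term_eq (τ : ℂ) {n : ℕ} (y : Fin n → ℂ) (ρ : Fin n → ℤ) :
    ∏ j, θ₃_term τ (y j) (ρ j)
      = cexp (2 * π * I * τ * ((∑ j, (ρ j : ℂ) ^ 2) / 2)) * cexp (2 * I * ∑ j, (ρ j : ℂ) * y j) := by
  simp only [θ₃_term, ← Complex.exp_sum, ← Complex.exp_add, sum_add_distrib, mul_sum, sum_div]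
  congr 2 <;> exact sum_congr rfl fun j _ => by ring

theorem sum_range_prod_θ₃_eq_tsum {τ : ℂ} (hτ : 0 < τ.im) {n N : ℕ} (hN : N ≠ 0)
    (w : Fin n → ℂ) :
    ∑ k ∈ range N, ∏ j, θ₃ (w j + k * π / N) τ
      = ∑' r : Fin n → ℤ, if (N : ℤ) ∣ ∑ j, r j then N * ∏ j, θ₃_term τ (w j) (r j) else 0 := by
  have hterm (v : Fin n → ℂ) (j : Fin n) := summable_norm_θ₃_term hτ (v j)
  have hshift (k : ℕ) (r : Fin n → ℤ) : ∏ j, θ₃_term τ (w j + k * π / N) (r j)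
      = (∏ j, θ₃_term τ (w j) (r j)) * cexp (2 * π * I * (∑ j, r j : ℤ) * k / N) := by
    simp only [θ₃_term_add, prod_mul_distrib, ← Complex.exp_sum]
    congr 2
    push_cast
    rw [mul_sum, sum_mul, sum_div]
    exact sum_congr rfl fun j _ => by ring
  simp_rw [θ₃_eq_tsum_θ₃_term]
  rw [sum_congr rfl fun k _ => (tsum_pi_prod (hterm _)).symm,
    ← Summable.tsum_finsetSum fun k _ => (summable_norm_pi_prod (hterm _)).of_norm]
  refine tsum_congr fun r => ?_
  rw [sum_congr rfl fun k _ => hshift k r, ← mul_sum, sum_range_exp_eq_ite hN, mul_ite, mul_zero,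
    mul_comm]

theorem circular_summation (τ : ℂ) (hτ : 0 < τ.im) (m n : ℕ) (hm : 0 < m) (hn : 0 < n)
    (y : Fin n → ℂ) (hy : ∑ j, y j = 0) (z : ℂ) :
    ∑ k ∈ Finset.range (m * n),
      ∏ j, θ₃ (z + y j + (k : ℂ) * Real.pi / ((m : ℂ) * n)) τ
    = G m n y τ * θ₃ (((m : ℂ) * n) * z) ((m : ℂ) ^ 2 * n * τ) := by
  have hτ' : 0 < ((m : ℂ) ^ 2 * n * τ).im := by
    have h : (m : ℂ) ^ 2 * n * τ = ((m ^ 2 * n : ℕ) : ℝ) * τ := by push_cast; ring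
    rw [h, im_ofReal_mul]
    positivity
  let A (ρ : {ρ : Fin n → ℤ // ∑ j, ρ j = 0}) : ℂ := ∏ j, θ₃_term τ (y j) (ρ.1 j)
  have hA : Summable fun ρ => ‖A ρ‖ :=
    (summable_norm_pi_prod fun j => summable_norm_θ₃_term hτ (y j)).subtype _
  have hG : G m n y τ = m * n * ∑' ρ, A ρ := by
    rw [G]
    exact congrArg _ (tsum_congr fun ρ => (prod_θ₃_term_eq τ y ρ.1).symm)
  have hsum := sum_range_prod_θ₃_eq_tsum hτ (N := m * n) (Nat.mul_pos hm hn).ne' fun j => z + y j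
  push_cast at hsum
  calc _ = ∑' p : ℤ × {ρ : Fin n → ℤ // ∑ j, ρ j = 0},
        (m * n : ℂ) * (θ₃_term ((m : ℂ) ^ 2 * n * τ) (m * n * z) p.1 * A p.2) := by
        rw [hsum, tsum_ite_dvd_sum_eq_tsum_shift hm.ne' hn.ne'
          fun r => (m * n : ℂ) * ∏ j, θ₃_term τ (z + y j) (r j)]
        exact tsum_congr fun p => by rw [prod_θ₃_term_add_mul τ z m hy p.2.2]; ring
    _ = _ := by
        rw [tsum_mul_left, ← tsum_mul_tsum_of_summable_norm (summable_norm_θ₃_term hτ' _) hA,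
          ← θ₃_eq_tsum_θ₃_term, hG]
        ring
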